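/- Let K and L be Hopf algebras over a field k of characteristic 0, let ζ : K → L be a bialgebra homomorphism, and let ρ : L → K ⊗ L be a k-algebra homomorphism which is a coassociative counital left coaction. Suppose the crossed comodule condition (iii) holds: (ζ ⊗ id_L) ∘ ρ = coad_L, where coad_L := (μ_L ⊗ id_L) ∘ (id_L ⊗ τ_{L,L}) ∘ (Δ_L ⊗ S_L) ∘ Δ_L. Then for all characters φ, ψ of L one has (φ ∘ ζ) ⋆_ρ ψ = φ ⋆ ψ ⋆ (φ ∘ S_L) in χ(L), where η ⋆_ρ ψ := μ_k ∘ (η ⊗ ψ) ∘ ρ for a character η of K and ⋆ is convolution in χ(L). That is, writing μ := (− ∘ ζ) : χ(L) → χ(K), the Peiffer identity (b) μ(φ) ⋆_ρ ψ = φ ⋆ ψ ⋆ φ⁻¹ holds. -/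

import Mathlib

/-!
Condition (iii) turns `(φ ∘ ζ) ⋆_ρ ψ` into `μ_k ∘ (φ ⊗ ψ) ∘ coad_L`. In Sweedler notation
`coad_L x = x₁ S(x₃) ⊗ x₂`, and since `φ` is multiplicative and `k` is commutative,
`φ(x₁ S(x₃)) ψ(x₂) = φ(x₁) ψ(x₂) φ(S x₃)`, which is `(φ ⋆ ψ ⋆ (φ ∘ S)) x`.
-/

open TensorProduct

/-- Convolution `φ ⋆ ψ := μ_k ∘ (φ ⊗ ψ) ∘ Δ` of linear functionals on a bialgebra. -/
noncomputable def hopfConv {k L : Type*} [CommRing k] [Ring L] [Bialgebra k L]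
    (φ ψ : L →ₗ[k] k) : L →ₗ[k] k :=
  LinearMap.mul' k k ∘ₗ TensorProduct.map φ ψ ∘ₗ Coalgebra.comul

/-- The pairing `η ⋆_ρ φ := μ_k ∘ (η ⊗ φ) ∘ ρ` along a coaction `ρ : L → K ⊗ L`. -/
noncomputable def coactConv {k K L : Type*} [CommRing k] [Ring K] [Bialgebra k K]
    [Ring L] [Bialgebra k L]
    (ρ : L →ₐ[k] K ⊗[k] L) (η : K →ₗ[k] k) (φ : L →ₗ[k] k) : L →ₗ[k] k :=
  LinearMap.mul' k k ∘ₗ TensorProduct.map η φ ∘ₗ ρ.toLinearMap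

/-- The adjoint coaction `coad_L = (μ_L ⊗ id) ∘ (id ⊗ τ) ∘ (Δ_L ⊗ S_L) ∘ Δ_L`. -/
noncomputable def hopfCoad {k L : Type*} [CommRing k] [Ring L] [HopfAlgebra k L] :
    L →ₗ[k] L ⊗[k] L :=
  TensorProduct.map (LinearMap.mul' k L) LinearMap.id
    ∘ₗ (TensorProduct.assoc k L L L).symm.toLinearMap
    ∘ₗ TensorProduct.map LinearMap.id (TensorProduct.comm k L L).toLinearMap
    ∘ₗ (TensorProduct.assoc k L L L).toLinearMap
    ∘ₗ TensorProduct.map Coalgebra.comul (HopfAlgebra.antipode (R := k))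
    ∘ₗ Coalgebra.comul

section

variable {k L : Type*} [CommRing k] [Ring L]

theorem coactConv_comp {K : Type*} [Ring K] [Bialgebra k K] [Bialgebra k L]
    (ρ : L →ₐ[k] K ⊗[k] L) (η : L →ₗ[k] k) (f : K →ₗ[k] L) (ψ : L →ₗ[k] k) :
    coactConv ρ (η ∘ₗ f) ψ
      = LinearMap.mul' k k ∘ₗ map η ψ ∘ₗ map f LinearMap.id ∘ₗ ρ.toLinearMap := by
  rw [coactConv, ← LinearMap.comp_assoc _ _ (map η ψ), ← map_comp, LinearMap.comp_id]

theorem mul'_map_comp_hopfCoad [HopfAlgebra k L] (φ : L →ₐ[k] k) (ψ : L →ₗ[k] k) :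
    LinearMap.mul' k k ∘ₗ map φ.toLinearMap ψ ∘ₗ hopfCoad
      = hopfConv (hopfConv φ.toLinearMap ψ) (φ.toLinearMap ∘ₗ HopfAlgebra.antipode k) := by
  have reorder :
      LinearMap.mul' k k ∘ₗ map φ.toLinearMap ψ
          ∘ₗ map (LinearMap.mul' k L) LinearMap.id
          ∘ₗ (TensorProduct.assoc k L L L).symm.toLinearMap
          ∘ₗ map LinearMap.id (TensorProduct.comm k L L).toLinearMap
          ∘ₗ (TensorProduct.assoc k L L L).toLinearMap
        = LinearMap.mul' k k
          ∘ₗ map (LinearMap.mul' k k ∘ₗ map φ.toLinearMap ψ) φ.toLinearMap := by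
    refine ext_threefold fun u v w => ?_
    simp only [LinearMap.comp_apply, LinearEquiv.coe_coe, assoc_tmul, map_tmul, comm_tmul,
      assoc_symm_tmul, LinearMap.mul'_apply, LinearMap.id_apply, AlgHom.toLinearMap_apply,
      map_mul]
    ring
  calc LinearMap.mul' k k ∘ₗ map φ.toLinearMap ψ ∘ₗ hopfCoad
      = (LinearMap.mul' k k
          ∘ₗ map (LinearMap.mul' k k ∘ₗ map φ.toLinearMap ψ) φ.toLinearMap)
          ∘ₗ map Coalgebra.comul (HopfAlgebra.antipode k) ∘ₗ Coalgebra.comul := by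
        simp only [hopfCoad, ← reorder, LinearMap.comp_assoc]
    _ = _ := by
        rw [hopfConv, hopfConv, ← LinearMap.comp_assoc Coalgebra.comul (map _ ψ), map_comp]
        simp only [LinearMap.comp_assoc]

end

theorem crossedComodule_condition_iii_on_characters_general
    (k : Type*) [Field k]
    (K : Type*) [Ring K] [HopfAlgebra k K]
    (L : Type*) [Ring L] [HopfAlgebra k L]
    (ζ : K →ₐc[k] L)
    (ρ : L →ₐ[k] K ⊗[k] L)
    -- condition (iii): (ζ ⊗ id_L) ∘ ρ = coad_L
    (h_iii : ∀ x : L,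
      (TensorProduct.map (ζ : K →ₗ[k] L) LinearMap.id) (ρ x) = hopfCoad x) :
    ∀ φ ψ : L →ₐ[k] k,
      coactConv ρ (φ.toLinearMap ∘ₗ (ζ : K →ₗ[k] L)) ψ.toLinearMap
        = hopfConv
            (hopfConv φ.toLinearMap ψ.toLinearMap)
            (φ.toLinearMap ∘ₗ HopfAlgebra.antipode (R := k)) := by
  intro φ ψ
  have h_iii' : map (ζ : K →ₗ[k] L) LinearMap.id ∘ₗ ρ.toLinearMap = hopfCoad :=
    LinearMap.ext h_iii
  rw [coactConv_comp, h_iii', mul'_map_comp_hopfCoad]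

/-- Condition (iii) of a crossed comodule of Hopf algebras
(`(ζ ⊗ id_L) ∘ ρ = coad_L`) yields, on characters, the Peiffer identity (b):
`(φ ∘ ζ) ⋆_ρ ψ = φ ⋆ ψ ⋆ (φ ∘ S_L) = μ(φ) ⋆_ρ ψ = φ ⋆ ψ ⋆ φ⁻¹` in `χ(L)`. -/
theorem crossedComodule_condition_iii_on_characters
    (k : Type*) [Field k] [CharZero k]
    (K : Type*) [Ring K] [HopfAlgebra k K]
    (L : Type*) [Ring L] [HopfAlgebra k L]
    (ζ : K →ₐc[k] L)
    (ρ : L →ₐ[k] K ⊗[k] L)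
    -- coassociativity: (id_K ⊗ ρ) ∘ ρ = (Δ_K ⊗ id_L) ∘ ρ
    (h_coassoc : ∀ x : L,
      (TensorProduct.map LinearMap.id ρ.toLinearMap) (ρ x)
        = (TensorProduct.assoc k K K L)
            ((TensorProduct.map (Coalgebra.comul (R := k)) LinearMap.id) (ρ x)))
    -- counitality: (ε_K ⊗ id_L) ∘ ρ = id_L
    (h_counit : ∀ x : L,
      (TensorProduct.lid k L)
        ((TensorProduct.map (Coalgebra.counit (R := k)) LinearMap.id) (ρ x)) = x)
    -- condition (iii): (ζ ⊗ id_L) ∘ ρ = coad_L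
    (h_iii : ∀ x : L,
      (TensorProduct.map (ζ : K →ₗ[k] L) LinearMap.id) (ρ x) = hopfCoad x) :
    ∀ φ ψ : L →ₐ[k] k,
      coactConv ρ (φ.toLinearMap ∘ₗ (ζ : K →ₗ[k] L)) ψ.toLinearMap
        = hopfConv
            (hopfConv φ.toLinearMap ψ.toLinearMap)
            (φ.toLinearMap ∘ₗ HopfAlgebra.antipode (R := k)) :=
  crossedComodule_condition_iii_on_characters_general k K L ζ ρ h_iii
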